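/- arXiv:2504.18098 — 2 statements merged into one kernel-verified Lean document; each statement's English description precedes it below -/
import Mathlib

section
/- The logarithm of the filtered stabilizer norm lower-bounds the log-free robustness of magic: for every n-qubit state ρ with ρ ≠ I/2^n that admits at least one finite real decomposition into pure stabilizer projectors, ln D̃(ρ) ≤ LR(ρ). -/
/-!
For a state `ρ`, `D̃(ρ) = (∑_{P ≠ I} |tr(ρP)|) / (2^n - 1)`, and the numerator is a seminorm in
`ρ`. So for any decomposition `ρ = ∑ xᵢ |ψᵢ⟩⟨ψᵢ|` into pure stabilizer states it is at most
`∑ |xᵢ|` times its value on a pure stabilizer state. For such a state every Pauli expectation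
lies in `{0, ±1}`: the Clifford conjugate `U† P U` is `±` a Pauli string, whose `⟨0|·|0⟩` entry
is `0` or `1`. Hence `∑_P |tr(ρP)| = ∑_P tr(ρP)² = 2^n tr(ρ²) = 2^n` by Parseval for the Pauli
basis, the numerator equals `2^n - 1`, and `D̃(ρ) ≤ ∑ |xᵢ|`. Taking logarithms is harmless also
when `D̃(ρ) = 0`, because `∑ |xᵢ| ≥ |∑ xᵢ| = tr ρ = 1`.
-/

open Matrix Complex BigOperators
open scoped ComplexOrder

noncomputable section

/-- Index type for `n` qubits: functions `Fin n → Fin 2` (cardinality `2^n`). -/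
abbrev QIdx (n : ℕ) := Fin n → Fin 2

/-- The four single-qubit Pauli matrices: `σ⁰ = I`, `σ¹ = σˣ`, `σ² = σᶻ`, `σ³ = σʸ`. -/
def pauliMat : Fin 4 → Matrix (Fin 2) (Fin 2) ℂ
  | 0 => 1
  | 1 => !![0, 1; 1, 0]
  | 2 => !![1, 0; 0, -1]
  | 3 => !![0, -Complex.I; Complex.I, 0]

/-- The Pauli string `σ^{a_1} ⊗ ⋯ ⊗ σ^{a_n}` as a `2^n × 2^n` matrix. -/
def pauliString {n : ℕ} (a : Fin n → Fin 4) : Matrix (QIdx n) (QIdx n) ℂ :=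
  fun i j => ∏ k, pauliMat (a k) (i k) (j k)

/-- An `n`-qubit state: positive semidefinite with unit trace. -/
def IsState {n : ℕ} (ρ : Matrix (QIdx n) (QIdx n) ℂ) : Prop :=
  ρ.PosSemidef ∧ ρ.trace = 1

/-- The `α`-moment of the Pauli spectrum `A_α(ρ) = 2^{-n} ∑_P |tr(ρP)|^{2α}`. -/
def Amom {n : ℕ} (α : ℝ) (ρ : Matrix (QIdx n) (QIdx n) ℂ) : ℝ :=
  ((2:ℝ)^n)⁻¹ * ∑ a : Fin n → Fin 4, ‖(ρ * pauliString a).trace‖ ^ (2 * α)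

/-- The 2-Rényi entropy `S₂(ρ) = -ln tr(ρ²)`. -/
def S2 {n : ℕ} (ρ : Matrix (QIdx n) (QIdx n) ℂ) : ℝ :=
  - Real.log ((ρ * ρ).trace.re)

/-- The magic witness `W_α(ρ) = (1/(1-α)) ln A_α(ρ) - ((1-2α)/(1-α)) S₂(ρ)`. -/
def Wit {n : ℕ} (α : ℝ) (ρ : Matrix (QIdx n) (QIdx n) ℂ) : ℝ :=
  (1 / (1 - α)) * Real.log (Amom α ρ) - ((1 - 2*α)/(1 - α)) * S2 ρ

/-- The stabilizer norm `D(ρ) = A_{1/2}(ρ) = 2^{-n} ∑_P |tr(ρP)|`. -/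
def Dnorm {n : ℕ} (ρ : Matrix (QIdx n) (QIdx n) ℂ) : ℝ :=
  Amom (1/2) ρ

/-- A Clifford unitary: unitary mapping every Pauli string to `±` a Pauli string. -/
def IsCliffordUnitary {n : ℕ} (U : Matrix (QIdx n) (QIdx n) ℂ) : Prop :=
  U ∈ Matrix.unitaryGroup (QIdx n) ℂ ∧
    ∀ a : Fin n → Fin 4, ∃ (b : Fin n → Fin 4) (ε : ℝ),
      (ε = 1 ∨ ε = -1) ∧ U * pauliString a * Uᴴ = (ε : ℂ) • pauliString b

/-- The computational all-zeros basis vector `|0⟩^{⊗n}`. -/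
def zeroVec (n : ℕ) : QIdx n → ℂ :=
  fun i => if (∀ k, i k = 0) then 1 else 0

/-- A pure stabilizer state vector: `U|0⟩^{⊗n}` for a Clifford unitary `U`. -/
def IsPureStab {n : ℕ} (ψ : QIdx n → ℂ) : Prop :=
  ∃ U, IsCliffordUnitary U ∧ ψ = U.mulVec (zeroVec n)

/-- The rank-one projector `|ψ⟩⟨ψ|`. -/
def proj {n : ℕ} (ψ : QIdx n → ℂ) : Matrix (QIdx n) (QIdx n) ℂ :=
  Matrix.vecMulVec ψ (star ψ)

/-- A mixed stabilizer state: a finite convex combination of pure stabilizer projectors. -/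
def IsMixedStab {n : ℕ} (ρ : Matrix (QIdx n) (QIdx n) ℂ) : Prop :=
  ∃ (k : ℕ) (p : Fin k → ℝ) (ψ : Fin k → QIdx n → ℂ),
    (∀ i, 0 ≤ p i) ∧ (∑ i, p i = 1) ∧ (∀ i, IsPureStab (ψ i)) ∧
    ρ = ∑ i, (p i : ℂ) • proj (ψ i)

/-- The set of values `ln ∑ᵢ |xᵢ|` over finite real stabilizer decompositions of `ρ`. -/
def StabDecomps {n : ℕ} (ρ : Matrix (QIdx n) (QIdx n) ℂ) : Set ℝ :=
  { r | ∃ (k : ℕ) (x : Fin k → ℝ) (ψ : Fin k → QIdx n → ℂ),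
      (∀ i, IsPureStab (ψ i)) ∧ ρ = ∑ i, (x i : ℂ) • proj (ψ i) ∧
      r = Real.log (∑ i, |x i|) }

/-- The log-free robustness of magic. -/
def LR {n : ℕ} (ρ : Matrix (QIdx n) (QIdx n) ℂ) : ℝ := sInf (StabDecomps ρ)

open Classical in
/-- Positive-semidefinite square root (junk value `0` off the PSD cone). -/
def psdSqrt {n : ℕ} (A : Matrix (QIdx n) (QIdx n) ℂ) : Matrix (QIdx n) (QIdx n) ℂ :=
  if h : A.PosSemidef then
    (h.1.eigenvectorUnitary : Matrix (QIdx n) (QIdx n) ℂ) * diagonal ((↑) ∘ (√·) ∘ h.1.eigenvalues) *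
      (star h.1.eigenvectorUnitary : Matrix (QIdx n) (QIdx n) ℂ)
  else 0

/-- The Uhlmann fidelity `F(ρ,σ) = (tr √(√ρ σ √ρ))²`. -/
def fidelity {n : ℕ} (ρ σ : Matrix (QIdx n) (QIdx n) ℂ) : ℝ :=
  ((psdSqrt (psdSqrt ρ * σ * psdSqrt ρ)).trace.re) ^ 2

/-- The stabilizer fidelity `D_F(ρ) = inf { -ln F(ρ,σ) : σ a mixed stabilizer state }`. -/
def DF {n : ℕ} (ρ : Matrix (QIdx n) (QIdx n) ℂ) : ℝ :=
  sInf { r | ∃ σ, IsMixedStab σ ∧ r = - Real.log (fidelity ρ σ) }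

/-- Filtered Pauli moment `Ã_α(ρ) = (2^n A_α(ρ) - 1)/(2^n - 1)`. -/
def Atil {n : ℕ} (α : ℝ) (ρ : Matrix (QIdx n) (QIdx n) ℂ) : ℝ :=
  ((2:ℝ)^n * Amom α ρ - 1) / ((2:ℝ)^n - 1)

/-- Filtered stabilizer norm `D̃(ρ) = (2^n D(ρ) - 1)/(2^n - 1)`. -/
def Dtil {n : ℕ} (ρ : Matrix (QIdx n) (QIdx n) ℂ) : ℝ :=
  ((2:ℝ)^n * Dnorm ρ - 1) / ((2:ℝ)^n - 1)

/-- Filtered magic witness `W̃_α(ρ) = (1/(1-α)) ln Ã_α(ρ) + ((1-2α)/(1-α)) ln Ã₁(ρ)`. -/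
def Wtil {n : ℕ} (α : ℝ) (ρ : Matrix (QIdx n) (QIdx n) ℂ) : ℝ :=
  (1/(1-α)) * Real.log (Atil α ρ) + ((1 - 2*α)/(1-α)) * Real.log (Atil 1 ρ)

/-- The maximally mixed state `I/2^n`. -/
def maxMixed (n : ℕ) : Matrix (QIdx n) (QIdx n) ℂ := ((2:ℂ)^n)⁻¹ • 1

/-- The single-qubit T-state vector `|T⟩ = (|0⟩ + e^{-iπ/4}|1⟩)/√2`. -/
def Tket : QIdx 1 → ℂ :=
  fun i => if i 0 = 0 then (Real.sqrt 2 : ℂ)⁻¹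
           else Complex.exp (-(Real.pi/4 : ℂ) * Complex.I) * (Real.sqrt 2 : ℂ)⁻¹

/-- The depolarized T-state `ρ_p = (1-p)|T⟩⟨T| + p·I₂/2`. -/
def rhoDep (p : ℝ) : Matrix (QIdx 1) (QIdx 1) ℂ :=
  ((1 - p : ℝ) : ℂ) • proj Tket + ((p : ℝ) : ℂ) • (((2:ℂ))⁻¹ • 1)

lemma pauliMat_zero_zero (c : Fin 4) : pauliMat c 0 0 = 0 ∨ pauliMat c 0 0 = 1 := by
  fin_cases c <;> simp [pauliMat]

lemma trace_pauliMat_mul (b c : Fin 4) :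
    ∑ x : Fin 2, ∑ y : Fin 2, pauliMat b x y * pauliMat c y x = if b = c then 2 else 0 := by
  fin_cases b <;> fin_cases c <;>
    simp [pauliMat, Fin.sum_univ_two, Matrix.one_apply] <;> ring_nf

lemma sum_pauliMat_mul_pauliMat (x y z w : Fin 2) :
    ∑ c : Fin 4, pauliMat c x y * pauliMat c z w = if x = w ∧ y = z then 2 else 0 := by
  fin_cases x <;> fin_cases y <;> fin_cases z <;> fin_cases w <;>
    norm_num [pauliMat, Fin.sum_univ_four, Matrix.one_apply]

section PauliString

variable {n : ℕ}

lemma pauliString_zero : pauliString (0 : Fin n → Fin 4) = 1 := by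
  ext i j
  simp [pauliString, pauliMat, Matrix.one_apply, Fintype.prod_boole, funext_iff]

lemma trace_pauliString_mul (a b : Fin n → Fin 4) :
    (pauliString a * pauliString b).trace = if a = b then 2 ^ n else 0 := by
  calc (pauliString a * pauliString b).trace
      = ∑ i : QIdx n, ∑ j : QIdx n,
          ∏ k, pauliMat (a k) (i k) (j k) * pauliMat (b k) (j k) (i k) := by
        simp [Matrix.trace, Matrix.mul_apply, pauliString, Finset.prod_mul_distrib]
    _ = ∏ k, ∑ x : Fin 2, ∑ y : Fin 2, pauliMat (a k) x y * pauliMat (b k) y x := by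
        simp only [Fintype.prod_sum]
    _ = if a = b then 2 ^ n else 0 := by
        simp only [trace_pauliMat_mul, Fintype.prod_ite_zero, funext_iff]
        simp

lemma sum_pauliString_mul_pauliString (i j u v : QIdx n) :
    ∑ a : Fin n → Fin 4, pauliString a i j * pauliString a u v
      = if i = v ∧ j = u then 2 ^ n else 0 := by
  calc ∑ a : Fin n → Fin 4, pauliString a i j * pauliString a u v
      = ∑ a : Fin n → Fin 4, ∏ k, pauliMat (a k) (i k) (j k) * pauliMat (a k) (u k) (v k) := by
        simp [pauliString, Finset.prod_mul_distrib]
    _ = ∏ k, ∑ c : Fin 4, pauliMat c (i k) (j k) * pauliMat c (u k) (v k) := by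
        rw [Fintype.prod_sum]
    _ = if i = v ∧ j = u then 2 ^ n else 0 := by
        simp only [sum_pauliMat_mul_pauliMat, Fintype.prod_ite_zero, funext_iff, forall_and]
        simp

lemma sum_trace_mul_pauliString_smul (A : Matrix (QIdx n) (QIdx n) ℂ) :
    ∑ a : Fin n → Fin 4, (A * pauliString a).trace • pauliString a = (2 : ℂ) ^ n • A := by
  ext x y
  calc (∑ a : Fin n → Fin 4, (A * pauliString a).trace • pauliString a) x y
      = ∑ i, ∑ j, A i j * ∑ a : Fin n → Fin 4, pauliString a j i * pauliString a x y := by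
        simp only [Matrix.sum_apply, Matrix.smul_apply, smul_eq_mul, Matrix.trace,
          Matrix.diag, Matrix.mul_apply, Finset.sum_mul, Finset.mul_sum]
        rw [Finset.sum_comm]
        refine Finset.sum_congr rfl fun i _ => ?_
        rw [Finset.sum_comm]
        exact Finset.sum_congr rfl fun j _ => Finset.sum_congr rfl fun a _ => by ring
    _ = ((2 : ℂ) ^ n • A) x y := by
        simp [sum_pauliString_mul_pauliString, ite_and, mul_comm]

lemma sum_trace_mul_pauliString_mul_trace (A B : Matrix (QIdx n) (QIdx n) ℂ) :
    ∑ a : Fin n → Fin 4, (A * pauliString a).trace * (B * pauliString a).trace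
      = 2 ^ n * (A * B).trace := by
  have h := congrArg (fun M => (B * M).trace) (sum_trace_mul_pauliString_smul A)
  simp only [Matrix.mul_sum, Matrix.mul_smul, Matrix.trace_sum, Matrix.trace_smul,
    smul_eq_mul] at h
  rw [h, Matrix.trace_mul_comm]

end PauliString

section Clifford

variable {n : ℕ}

lemma eq_of_pauliString_eq_smul {a b : Fin n → Fin 4} {c : ℂ}
    (h : pauliString a = c • pauliString b) : a = b := by
  have htr := congrArg (fun M => (M * pauliString a).trace) h
  simp only [Matrix.smul_mul, Matrix.trace_smul, trace_pauliString_mul, smul_eq_mul] at htr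
  by_contra hab
  simp [Ne.symm hab] at htr

lemma conjTranspose_mul_mul_mul_self {m : Type*} [Fintype m] [DecidableEq m]
    {U : Matrix m m ℂ} (hU : Uᴴ * U = 1) (X : Matrix m m ℂ) : Uᴴ * (U * X * Uᴴ) * U = X := by
  simp only [← Matrix.mul_assoc, hU, Matrix.one_mul]
  rw [Matrix.mul_assoc, hU, Matrix.mul_one]

lemma IsCliffordUnitary.conjTranspose {U : Matrix (QIdx n) (QIdx n) ℂ}
    (hU : IsCliffordUnitary U) : IsCliffordUnitary Uᴴ := by
  obtain ⟨hUu, hcl⟩ := hU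
  have hU1 : Uᴴ * U = 1 := Unitary.star_mul_self_of_mem hUu
  choose f ε hε hf using hcl
  have hεsq : ∀ a, (ε a : ℂ) * ε a = 1 := fun a => by rcases hε a with h | h <;> simp [h]
  have hback : ∀ a, pauliString a = (ε a : ℂ) • (Uᴴ * pauliString (f a) * U) := fun a => by
    rw [← conjTranspose_mul_mul_mul_self hU1 (pauliString a), hf, Matrix.mul_smul,
      Matrix.smul_mul]
  have hf_inj : Function.Injective f := fun a a' h => by
    refine eq_of_pauliString_eq_smul (c := ε a * ε a') ?_
    rw [hback a, hback a', h, smul_smul, mul_assoc (ε a : ℂ), hεsq, mul_one]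
  refine ⟨Unitary.star_mem hUu, fun a => ?_⟩
  obtain ⟨a', rfl⟩ := (Finite.injective_iff_surjective.mp hf_inj) a
  refine ⟨a', ε a', hε a', ?_⟩
  rw [Matrix.conjTranspose_conjTranspose, hback a', smul_smul, hεsq, one_smul]

end Clifford

section Stabilizer

variable {n : ℕ}

lemma zeroVec_eq_single : zeroVec n = Pi.single 0 1 := by
  ext i
  simp [zeroVec, Pi.single_apply, funext_iff]

lemma star_mulVec_dotProduct_mulVec_mulVec {m : Type*} [Fintype m] (U M : Matrix m m ℂ)
    (v : m → ℂ) :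
    star (U *ᵥ v) ⬝ᵥ M *ᵥ (U *ᵥ v) = star v ⬝ᵥ (Uᴴ * M * U) *ᵥ v := by
  rw [Matrix.star_mulVec, Matrix.mulVec_mulVec, Matrix.dotProduct_mulVec, Matrix.vecMul_vecMul,
    ← Matrix.dotProduct_mulVec, ← Matrix.mul_assoc]

lemma trace_proj_mul (ψ : QIdx n → ℂ) (M : Matrix (QIdx n) (QIdx n) ℂ) :
    (proj ψ * M).trace = star ψ ⬝ᵥ M *ᵥ ψ := by
  rw [proj, Matrix.vecMulVec_mul, Matrix.trace_vecMulVec, dotProduct_comm,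
    ← Matrix.dotProduct_mulVec]

lemma pauliString_zero_zero (b : Fin n → Fin 4) :
    pauliString b 0 0 = 0 ∨ pauliString b 0 0 = 1 :=
  Finset.prod_induction _ (fun x => x = 0 ∨ x = 1)
    (fun x y hx hy => by rcases hx with rfl | rfl <;> simp [hy])
    (Or.inr rfl) fun k _ => pauliMat_zero_zero (b k)

namespace IsPureStab

variable {ψ : QIdx n → ℂ}

lemma exists_dotProduct_mulVec_eq_conj_apply (h : IsPureStab ψ)
    (M : Matrix (QIdx n) (QIdx n) ℂ) : ∃ U : Matrix (QIdx n) (QIdx n) ℂ,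
      IsCliffordUnitary U ∧ star ψ ⬝ᵥ M *ᵥ ψ = (Uᴴ * M * U) 0 0 := by
  obtain ⟨U, hU, rfl⟩ := h
  refine ⟨U, hU, ?_⟩
  rw [star_mulVec_dotProduct_mulVec_mulVec, zeroVec_eq_single, Matrix.mulVec_single,
    Pi.star_single, star_one, single_dotProduct]
  simp

lemma dotProduct_self (h : IsPureStab ψ) : star ψ ⬝ᵥ ψ = 1 := by
  obtain ⟨U, hU, hψ⟩ := h.exists_dotProduct_mulVec_eq_conj_apply 1
  have hU1 : Uᴴ * U = 1 := Unitary.star_mul_self_of_mem hU.1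
  rw [Matrix.one_mulVec, Matrix.mul_one, hU1] at hψ
  simpa using hψ

lemma trace_proj (h : IsPureStab ψ) : (proj ψ).trace = 1 := by
  rw [proj, Matrix.trace_vecMulVec, dotProduct_comm, h.dotProduct_self]

lemma proj_mul_self (h : IsPureStab ψ) : proj ψ * proj ψ = proj ψ := by
  rw [proj, Matrix.vecMulVec_mul_vecMulVec, h.dotProduct_self, one_smul]

lemma trace_proj_mul_pauliString (h : IsPureStab ψ) (a : Fin n → Fin 4) :
    (proj ψ * pauliString a).trace ∈ ({0, 1, -1} : Set ℂ) := by
  obtain ⟨U, hU, hψ⟩ := h.exists_dotProduct_mulVec_eq_conj_apply (pauliString a)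
  obtain ⟨b, ε, hε, hb⟩ := hU.conjTranspose.2 a
  rw [Matrix.conjTranspose_conjTranspose] at hb
  rw [trace_proj_mul, hψ, hb, Matrix.smul_apply, smul_eq_mul]
  rcases hε with rfl | rfl <;> rcases pauliString_zero_zero b with h0 | h0 <;> simp [h0]

lemma sum_norm_trace_proj_mul_pauliString (h : IsPureStab ψ) :
    ∑ a : Fin n → Fin 4, ‖(proj ψ * pauliString a).trace‖ = 2 ^ n := by
  have hsq : ∀ a : Fin n → Fin 4, (‖(proj ψ * pauliString a).trace‖ : ℂ)
      = (proj ψ * pauliString a).trace * (proj ψ * pauliString a).trace := fun a => by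
    obtain h0 | h0 | h0 : _ = 0 ∨ _ = 1 ∨ _ = -1 := h.trace_proj_mul_pauliString a <;> simp [h0]
  have hparseval := sum_trace_mul_pauliString_mul_trace (proj ψ) (proj ψ)
  rw [h.proj_mul_self, h.trace_proj, mul_one] at hparseval
  have : ((∑ a : Fin n → Fin 4, ‖(proj ψ * pauliString a).trace‖ : ℝ) : ℂ) = 2 ^ n := by
    rw [Complex.ofReal_sum]
    simp only [hsq, hparseval]
  exact_mod_cast this

end IsPureStab

end Stabilizer

section OffIdentity

variable {n : ℕ}

def offIdentityPauliL1 (ρ : Matrix (QIdx n) (QIdx n) ℂ) : ℝ :=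
  ∑ a ∈ Finset.univ.erase 0, ‖(ρ * pauliString a).trace‖

lemma offIdentityPauliL1_nonneg (ρ : Matrix (QIdx n) (QIdx n) ℂ) : 0 ≤ offIdentityPauliL1 ρ :=
  Finset.sum_nonneg fun _ _ => norm_nonneg _

lemma offIdentityPauliL1_sum_smul_le {ι : Type*} [Fintype ι] (x : ι → ℝ)
    (M : ι → Matrix (QIdx n) (QIdx n) ℂ) :
    offIdentityPauliL1 (∑ i, (x i : ℂ) • M i) ≤ ∑ i, |x i| * offIdentityPauliL1 (M i) := by
  unfold offIdentityPauliL1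
  simp only [Finset.mul_sum]
  rw [Finset.sum_comm]
  refine Finset.sum_le_sum fun a _ => ?_
  simp only [Finset.sum_mul, Matrix.trace_sum, Matrix.smul_mul, Matrix.trace_smul, smul_eq_mul]
  refine (norm_sum_le _ _).trans_eq (Finset.sum_congr rfl fun i _ => ?_)
  rw [norm_mul, Complex.norm_real, Real.norm_eq_abs]

lemma IsPureStab.offIdentityPauliL1_proj {ψ : QIdx n → ℂ} (h : IsPureStab ψ) :
    offIdentityPauliL1 (proj ψ) = 2 ^ n - 1 := by
  have hsum := h.sum_norm_trace_proj_mul_pauliString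
  rw [← Finset.add_sum_erase _ _ (Finset.mem_univ 0), pauliString_zero, Matrix.mul_one,
    h.trace_proj, norm_one] at hsum
  unfold offIdentityPauliL1
  linarith

lemma Dtil_eq_offIdentityPauliL1_div {ρ : Matrix (QIdx n) (QIdx n) ℂ} (hρ : ρ.trace = 1) :
    Dtil ρ = offIdentityPauliL1 ρ / (2 ^ n - 1) := by
  have hD : (2 : ℝ) ^ n * Dnorm ρ = ∑ a : Fin n → Fin 4, ‖(ρ * pauliString a).trace‖ := by
    norm_num [Dnorm, Amom]
  rw [Dtil, hD, ← Finset.add_sum_erase _ _ (Finset.mem_univ 0), pauliString_zero,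
    Matrix.mul_one, hρ, norm_one, add_sub_cancel_left, offIdentityPauliL1]

lemma Dtil_nonneg {ρ : Matrix (QIdx n) (QIdx n) ℂ} (hρ : ρ.trace = 1) : 0 ≤ Dtil ρ := by
  rw [Dtil_eq_offIdentityPauliL1_div hρ]
  exact div_nonneg (offIdentityPauliL1_nonneg ρ) (sub_nonneg.mpr (one_le_pow₀ one_le_two))

lemma trace_sum_smul_proj {ι : Type*} [Fintype ι] (x : ι → ℝ) {ψ : ι → QIdx n → ℂ}
    (hψ : ∀ i, IsPureStab (ψ i)) : (∑ i, (x i : ℂ) • proj (ψ i)).trace = ∑ i, (x i : ℂ) := by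
  simp [Matrix.trace_sum, Matrix.trace_smul, fun i => (hψ i).trace_proj]

lemma Dtil_sum_smul_proj_le {ι : Type*} [Fintype ι] (x : ι → ℝ) {ψ : ι → QIdx n → ℂ}
    (hψ : ∀ i, IsPureStab (ψ i)) (htr : (∑ i, (x i : ℂ) • proj (ψ i)).trace = 1) :
    Dtil (∑ i, (x i : ℂ) • proj (ψ i)) ≤ ∑ i, |x i| := by
  rw [Dtil_eq_offIdentityPauliL1_div htr]
  refine div_le_of_le_mul₀ (sub_nonneg.mpr (one_le_pow₀ one_le_two))
    (Finset.sum_nonneg fun i _ => abs_nonneg (x i)) ?_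
  calc offIdentityPauliL1 (∑ i, (x i : ℂ) • proj (ψ i))
      ≤ ∑ i, |x i| * offIdentityPauliL1 (proj (ψ i)) := offIdentityPauliL1_sum_smul_le x _
    _ = (∑ i, |x i|) * (2 ^ n - 1) := by
        simp only [fun i => (hψ i).offIdentityPauliL1_proj, Finset.sum_mul]

end OffIdentity

theorem log_filtered_stabNorm_le_LR_general {n : ℕ} (ρ : Matrix (QIdx n) (QIdx n) ℂ)
    (hρ : IsState ρ) (hdec : (StabDecomps ρ).Nonempty) :
    Real.log (Dtil ρ) ≤ LR ρ := by
  refine le_csInf hdec ?_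
  rintro _ ⟨k, x, ψ, hψ, rfl, rfl⟩
  have htr := hρ.2
  have hsum : ∑ i, x i = 1 := by exact_mod_cast (trace_sum_smul_proj x hψ).symm.trans htr
  have hone : 1 ≤ ∑ i, |x i| := by
    simpa [hsum] using Finset.abs_sum_le_sum_abs x Finset.univ
  rcases (Dtil_nonneg htr).eq_or_lt with hzero | hpos
  · rw [← hzero, Real.log_zero]
    exact Real.log_nonneg hone
  · exact Real.log_le_log hpos (Dtil_sum_smul_proj_le x hψ htr)

/-- the log of the filtered stabilizer norm lower-bounds the
log-free robustness of magic: `ln D̃(ρ) ≤ LR(ρ)`. -/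
theorem log_filtered_stabNorm_le_LR {n : ℕ} (ρ : Matrix (QIdx n) (QIdx n) ℂ)
    (hρ : IsState ρ) (hne : ρ ≠ maxMixed n) (hdec : (StabDecomps ρ).Nonempty) :
    Real.log (Dtil ρ) ≤ LR ρ :=
  log_filtered_stabNorm_le_LR_general ρ hρ hdec

end
end

section
/- For the depolarized single-qubit T-state ρ_p = (1−p)|T⟩⟨T| + p·I₂/2 with 0 ≤ p < 1, the filtered magic witness is independent of the Rényi index: for every real α ≥ 1/2 with α ≠ 1, W̃_α(ρ_p) = ln(2(1−p)²). -/
open Matrix Complex BigOperators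
open scoped ComplexOrder

noncomputable section

/-!
The Pauli spectrum of `ρ_p` is `(1, (1-p)/√2, 0, -(1-p)/√2)`, so `Ã_α(ρ_p) = 2 ((1-p)²/2)^α` is a
pure power law in `α`. For any power law `Ã_α = b c^α` the `α`-dependence of `W̃_α` cancels,
leaving `ln (b² c)`.
-/

theorem sum_fun_fin_one {α M : Type*} [Fintype α] [AddCommMonoid M] (f : (Fin 1 → α) → M) :
    ∑ a, f a = ∑ x, f (fun _ => x) :=
  ((Equiv.funUnique (Fin 1) α).symm.sum_comp f).symm

theorem Amom_fin_one (α : ℝ) (M : Matrix (QIdx 1) (QIdx 1) ℂ) :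
    Amom α M = 2⁻¹ * ∑ a : Fin 4, ‖(M * pauliString (fun _ => a)).trace‖ ^ (2 * α) := by
  rw [Amom, sum_fun_fin_one, pow_one]

local notation "q[" i "]" => (fun _ : Fin 1 => (i : Fin 2))

section SingleQubit

variable (M : Matrix (QIdx 1) (QIdx 1) ℂ)

theorem trace_mul_pauliString_fin_one (a : Fin 4) :
    (M * pauliString (fun _ => a)).trace =
      ∑ i : Fin 2, ∑ j : Fin 2, M q[i] q[j] * pauliMat a j i := by
  simp only [Matrix.trace, Matrix.diag, Matrix.mul_apply, sum_fun_fin_one, pauliString,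
    Fin.prod_univ_one]

theorem trace_mul_pauliI_fin_one :
    (M * pauliString (fun _ => 0)).trace = M q[0] q[0] + M q[1] q[1] := by
  simp [trace_mul_pauliString_fin_one, Fin.sum_univ_two, pauliMat]

theorem trace_mul_pauliX_fin_one :
    (M * pauliString (fun _ => 1)).trace = M q[0] q[1] + M q[1] q[0] := by
  simp [trace_mul_pauliString_fin_one, Fin.sum_univ_two, pauliMat]

theorem trace_mul_pauliZ_fin_one :
    (M * pauliString (fun _ => 2)).trace = M q[0] q[0] - M q[1] q[1] := by
  simp [trace_mul_pauliString_fin_one, Fin.sum_univ_two, pauliMat, sub_eq_add_neg]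

theorem trace_mul_pauliY_fin_one :
    (M * pauliString (fun _ => 3)).trace = Complex.I * (M q[0] q[1] - M q[1] q[0]) := by
  simp only [trace_mul_pauliString_fin_one, pauliMat, Fin.sum_univ_two, Matrix.of_apply,
    Matrix.cons_val', Matrix.cons_val_fin_one, Matrix.cons_val_zero, Matrix.cons_val_one, mul_zero,
    zero_add, add_zero, mul_neg]
  ring

end SingleQubit

theorem Tket_zero : Tket q[0] = (Real.sqrt 2 : ℂ)⁻¹ := if_pos rfl

theorem Tket_one : Tket q[1] = (1 - Complex.I) / 2 := by
  have hω : Complex.exp (-(Real.pi / 4 : ℂ) * Complex.I) =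
      (Real.sqrt 2 / 2 : ℝ) * (1 - Complex.I) := by
    rw [← Complex.ofReal_ofNat, ← Complex.ofReal_div, ← Complex.ofReal_neg, Complex.exp_mul_I,
      ← Complex.ofReal_cos, ← Complex.ofReal_sin, Real.cos_neg, Real.sin_neg, Real.cos_pi_div_four,
      Real.sin_pi_div_four]
    push_cast; ring
  rw [Tket, if_neg (by decide), hω]
  push_cast
  field_simp

theorem Tket_zero_mul_star_self : Tket q[0] * star (Tket q[0]) = 1 / 2 := by
  rw [Tket_zero, star_inv₀, Complex.star_def, Complex.conj_ofReal, ← mul_inv, ← Complex.ofReal_mul,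
    Real.mul_self_sqrt zero_le_two]
  norm_num

theorem Tket_one_mul_star_self : Tket q[1] * star (Tket q[1]) = 1 / 2 := by
  rw [Tket_one]
  simp only [star_div₀, star_sub, star_one, Complex.star_def, Complex.conj_I, map_ofNat]
  linear_combination (-1 / 4 : ℂ) * Complex.I_sq

theorem Tket_zero_mul_star_one :
    Tket q[0] * star (Tket q[1]) = (1 + Complex.I) / (2 * Real.sqrt 2) := by
  rw [Tket_zero, Tket_one]
  simp only [star_div₀, star_sub, star_one, Complex.star_def, Complex.conj_I, map_ofNat,
    sub_neg_eq_add]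
  field_simp

theorem Tket_one_mul_star_zero :
    Tket q[1] * star (Tket q[0]) = (1 - Complex.I) / (2 * Real.sqrt 2) := by
  rw [Tket_zero, Tket_one, star_inv₀, Complex.star_def, Complex.conj_ofReal]
  field_simp

theorem rhoDep_apply (p : ℝ) (i j : Fin 2) :
    rhoDep p q[i] q[j] =
      (1 - p) * (Tket q[i] * star (Tket q[j])) + if i = j then (p : ℂ) / 2 else 0 := by
  simp only [rhoDep, proj, Matrix.add_apply, Matrix.smul_apply, Matrix.vecMulVec_apply,
    Pi.star_apply, Matrix.one_apply, funext_iff, Fin.forall_fin_one]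
  split_ifs <;> simp [div_eq_mul_inv]

theorem trace_rhoDep_mul_pauliI (p : ℝ) : (rhoDep p * pauliString (fun _ => 0)).trace = 1 := by
  rw [trace_mul_pauliI_fin_one, rhoDep_apply, rhoDep_apply, Tket_zero_mul_star_self,
    Tket_one_mul_star_self]
  simp only [if_true]
  ring

theorem trace_rhoDep_mul_pauliX (p : ℝ) :
    (rhoDep p * pauliString (fun _ => 1)).trace = (((1 - p) / Real.sqrt 2 : ℝ) : ℂ) := by
  rw [trace_mul_pauliX_fin_one, rhoDep_apply, rhoDep_apply, Tket_zero_mul_star_one,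
    Tket_one_mul_star_zero]
  simp only [if_neg (by decide : (0 : Fin 2) ≠ 1), if_neg (by decide : (1 : Fin 2) ≠ 0)]
  push_cast
  field_simp
  ring

theorem trace_rhoDep_mul_pauliZ (p : ℝ) : (rhoDep p * pauliString (fun _ => 2)).trace = 0 := by
  rw [trace_mul_pauliZ_fin_one, rhoDep_apply, rhoDep_apply, Tket_zero_mul_star_self,
    Tket_one_mul_star_self]
  simp only [if_true, sub_self]

theorem trace_rhoDep_mul_pauliY (p : ℝ) :
    (rhoDep p * pauliString (fun _ => 3)).trace = -(((1 - p) / Real.sqrt 2 : ℝ) : ℂ) := by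
  rw [trace_mul_pauliY_fin_one, rhoDep_apply, rhoDep_apply, Tket_zero_mul_star_one,
    Tket_one_mul_star_zero]
  simp only [if_neg (by decide : (0 : Fin 2) ≠ 1), if_neg (by decide : (1 : Fin 2) ≠ 0)]
  push_cast
  field_simp
  linear_combination (2 * (1 - (p : ℂ))) * Complex.I_sq

theorem norm_ofReal_rpow_two_mul (x α : ℝ) : ‖(x : ℂ)‖ ^ (2 * α) = (x ^ 2) ^ α := by
  rw [Complex.norm_real, Real.norm_eq_abs, Real.rpow_mul (abs_nonneg x), Real.rpow_two, sq_abs]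

theorem Atil_rhoDep (p : ℝ) {α : ℝ} (hα : α ≠ 0) :
    Atil α (rhoDep p) = 2 * ((1 - p) ^ 2 / 2) ^ α := by
  have hq : ((1 - p) / Real.sqrt 2) ^ 2 = (1 - p) ^ 2 / 2 := by
    rw [div_pow, Real.sq_sqrt zero_le_two]
  rw [Atil, Amom_fin_one, Fin.sum_univ_four, trace_rhoDep_mul_pauliI, trace_rhoDep_mul_pauliX,
    trace_rhoDep_mul_pauliZ, trace_rhoDep_mul_pauliY, norm_neg, norm_ofReal_rpow_two_mul, hq,
    norm_one, norm_zero, Real.one_rpow, Real.zero_rpow (mul_ne_zero two_ne_zero hα)]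
  norm_num
  ring

theorem Wtil_eq_log_of_Atil_eq {n : ℕ} {ρ : Matrix (QIdx n) (QIdx n) ℂ} {α b c : ℝ} (hα : α ≠ 1)
    (hb : 0 < b) (hc : 0 < c) (hAα : Atil α ρ = b * c ^ α) (hA1 : Atil 1 ρ = b * c) :
    Wtil α ρ = Real.log (b ^ 2 * c) := by
  have h1α : 1 - α ≠ 0 := sub_ne_zero.mpr (Ne.symm hα)
  rw [Wtil, hAα, hA1, Real.log_mul hb.ne' (Real.rpow_pos_of_pos hc α).ne', Real.log_rpow hc,
    Real.log_mul hb.ne' hc.ne', Real.log_mul (by positivity) hc.ne', Real.log_pow]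
  field_simp
  ring

theorem filtered_witness_depolarized_T_general (p : ℝ) (hp1 : p < 1)
    (α : ℝ) (hα : (1:ℝ)/2 ≤ α) (hα1 : α ≠ 1) :
    Wtil α (rhoDep p) = Real.log (2 * (1 - p)^2) := by
  have hc : 0 < (1 - p) ^ 2 / 2 := by
    have : 0 < 1 - p := sub_pos.mpr hp1
    positivity
  have hα0 : α ≠ 0 := by rintro rfl; norm_num at hα
  rw [Wtil_eq_log_of_Atil_eq hα1 two_pos hc (Atil_rhoDep p hα0)
    (by rw [Atil_rhoDep p one_ne_zero, Real.rpow_one])]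
  congr 1
  ring

/-- for the depolarized T-state `ρ_p = (1-p)|T⟩⟨T| + p I₂/2`,
`0 ≤ p < 1`, the filtered witness is independent of the Rényi index:
`W̃_α(ρ_p) = ln (2(1-p)²)` for all `α ≥ 1/2`, `α ≠ 1`. -/
theorem filtered_witness_depolarized_T (p : ℝ) (hp0 : 0 ≤ p) (hp1 : p < 1)
    (α : ℝ) (hα : (1:ℝ)/2 ≤ α) (hα1 : α ≠ 1) :
    Wtil α (rhoDep p) = Real.log (2 * (1 - p)^2) :=
  filtered_witness_depolarized_T_general p hp1 α hα hα1

end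
end
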